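/- If a uniformly random permutation σ of {1,...,N} is written as σ = (N x_N)∘(N−1 x_{N−1})∘...∘(2 x_2) with independent uniform x_k ∈ {1,...,k}, then changing a single x_k to another value x_k' changes the values of σ at no more than 3 positions. -/

import Mathlib

/-- The permutation built from the sequence of transpositions
`(N x_N) ∘ (N−1 x_{N−1}) ∘ ... ∘ (1 x_1)` (0-indexed: positions `0,...,N-1`,
with `x k ≤ k`, where `x k = k` means no change). -/
def buildPerm {N : ℕ} (x : Fin N → Fin N) : Equiv.Perm (Fin N) :=
  ((List.finRange N).reverse.map (fun k => Equiv.swap k (x k))).prod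

theorem transposition_change_bound {N : ℕ} (x x' : Fin N → Fin N)
    (hx : ∀ k, (x k : ℕ) ≤ (k : ℕ)) (hx' : ∀ k, (x' k : ℕ) ≤ (k : ℕ))
    (k₀ : Fin N) (hdiff : ∀ j, j ≠ k₀ → x j = x' j) :
    (Finset.univ.filter (fun i : Fin N => buildPerm x i ≠ buildPerm x' i)).card ≤ 3 := by
  classical
  obtain ⟨L₁, L₂, hL⟩ := List.append_of_mem (l := (List.finRange N).reverse) (a := k₀)
    (by simp)
  have hnd : ((List.finRange N).reverse).Nodup := List.nodup_reverse.mpr (List.nodup_finRange N)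
  rw [hL] at hnd
  have hk1 : k₀ ∉ L₁ := fun h => (List.disjoint_of_nodup_append hnd) h List.mem_cons_self
  have hk2 : k₀ ∉ L₂ := by
    have := (List.nodup_append'.mp hnd).2.1
    exact (List.nodup_cons.mp this).1
  set A : Equiv.Perm (Fin N) := (L₁.map (fun k => Equiv.swap k (x k))).prod with hA
  set H : Equiv.Perm (Fin N) := (L₂.map (fun k => Equiv.swap k (x k))).prod with hH
  have hmap1 : L₁.map (fun k => Equiv.swap k (x k)) = L₁.map (fun k => Equiv.swap k (x' k)) :=
    List.map_congr_left (fun j hj => by rw [hdiff j (by rintro rfl; exact hk1 hj)])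
  have hmap2 : L₂.map (fun k => Equiv.swap k (x k)) = L₂.map (fun k => Equiv.swap k (x' k)) :=
    List.map_congr_left (fun j hj => by rw [hdiff j (by rintro rfl; exact hk2 hj)])
  have h1 : buildPerm x = A * (Equiv.swap k₀ (x k₀) * H) := by
    rw [buildPerm, hL, List.map_append, List.map_cons, List.prod_append, List.prod_cons]
  have h2 : buildPerm x' = A * (Equiv.swap k₀ (x' k₀) * H) := by
    rw [buildPerm, hL, List.map_append, List.map_cons, List.prod_append, List.prod_cons,
      hA, hH, hmap1, hmap2]
  have hsub : (Finset.univ.filter (fun i : Fin N => buildPerm x i ≠ buildPerm x' i)) ⊆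
      {H⁻¹ k₀, H⁻¹ (x k₀), H⁻¹ (x' k₀)} := by
    intro i hi
    simp only [Finset.mem_filter] at hi
    have hne : Equiv.swap k₀ (x k₀) (H i) ≠ Equiv.swap k₀ (x' k₀) (H i) := by
      intro h
      apply hi.2
      rw [h1, h2]
      simp [Equiv.Perm.mul_apply, h]
    have hy : H i = k₀ ∨ H i = x k₀ ∨ H i = x' k₀ := by
      by_contra hc
      push_neg at hc
      exact hne (by rw [Equiv.swap_apply_of_ne_of_ne hc.1 hc.2.1,
        Equiv.swap_apply_of_ne_of_ne hc.1 hc.2.2])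
    simp only [Finset.mem_insert, Finset.mem_singleton]
    rcases hy with h | h | h
    · exact Or.inl (by rw [← h]; simp)
    · exact Or.inr (Or.inl (by rw [← h]; simp))
    · exact Or.inr (Or.inr (by rw [← h]; simp))
  refine (Finset.card_le_card hsub).trans ?_
  refine (Finset.card_insert_le _ _).trans (Nat.succ_le_succ ?_)
  refine (Finset.card_insert_le _ _).trans (Nat.succ_le_succ ?_)
  simp
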